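/- arXiv:math/9506202 — 2 statements merged into one kernel-verified Lean document; each statement's English description precedes it below -/
import Mathlib

section
/- If a formal power series u(x,y) in two variables is invariant under both τ₁*(x,y)=(-x,-2x+y) and τ₂*(x,y)=(-x,2x+y) (i.e., u∘τ₁* = u and u∘τ₂* = u), then u depends only on x and contains only even powers of x; in particular if additionally u(x,0) = -u(-x,0), then u = 0. -/
open MvPowerSeries

/-- Composition `u ∘ τ` of a formal power series `u(x,y) ∈ ℂ[[x,y]]` with the linear map
`τ(x,y) = (e·x, c·x + y)`, defined coefficientwise:
the coefficient of `x^M y^K` in `u(ex, cx+y)` is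
`Σ_{t=0}^{M} e^{M-t} c^t C(K+t, t) · u_{M-t, K+t}`. -/
noncomputable def compLin (e c : ℂ) (u : MvPowerSeries (Fin 2) ℂ) :
    MvPowerSeries (Fin 2) ℂ :=
  fun m => ∑ t ∈ Finset.range (m 0 + 1),
    e ^ (m 0 - t) * c ^ t * ((m 1 + t).choose t : ℂ) *
      MvPowerSeries.coeff (Finsupp.single 0 (m 0 - t) + Finsupp.single 1 (m 1 + t)) u

/-! Subtracting the relations `u ∘ τ₁* = u` and `u ∘ τ₂* = u` at `x^{M+1} y^K` cancels the
`t = 0` term, and by induction on `M` every term with `t ≥ 2`; what is left is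
`4 (-1)^M (K+1) u_{M,K+1} = 0`. Once `u` is free of `y`, either relation at `x^M` reads
`(-1)^M u_{M,0} = u_{M,0}`. -/

lemma Finsupp.eq_single_zero_add_single_one (m : Fin 2 →₀ ℕ) :
    m = Finsupp.single 0 (m 0) + Finsupp.single 1 (m 1) := by
  ext i; fin_cases i <;> simp

lemma coeff_compLin (e c : ℂ) (u : MvPowerSeries (Fin 2) ℂ) (M K : ℕ) :
    coeff (Finsupp.single 0 M + Finsupp.single 1 K) (compLin e c u) =
      ∑ t ∈ Finset.range (M + 1), e ^ (M - t) * c ^ t * ((K + t).choose t : ℂ) *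
        coeff (Finsupp.single 0 (M - t) + Finsupp.single 1 (K + t)) u := by
  simp [compLin, coeff_apply]

lemma coeff_single_add_single_succ_eq_zero_of_compLin_eq_self {e c c' : ℂ} (he : e ≠ 0)
    (hc : c ≠ c') {u : MvPowerSeries (Fin 2) ℂ} (h : compLin e c u = u)
    (h' : compLin e c' u = u) (M K : ℕ) :
    coeff (Finsupp.single 0 M + Finsupp.single 1 (K + 1)) u = 0 := by
  induction M using Nat.strong_induction_on generalizing K with
  | _ M ih =>
    set a : ℕ → ℂ := fun t => e ^ (M + 1 - t) * (c ^ t - c' ^ t) * ((K + t).choose t : ℂ) *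
      coeff (Finsupp.single 0 (M + 1 - t) + Finsupp.single 1 (K + t)) u with ha
    have hdiff : ∑ t ∈ Finset.range (M + 2), a t = 0 := by
      set n : Fin 2 →₀ ℕ := Finsupp.single 0 (M + 1) + Finsupp.single 1 K
      have := congrArg₂ (· - ·) (congrArg (coeff n) h) (congrArg (coeff n) h')
      simp only [n, coeff_compLin, ← Finset.sum_sub_distrib, sub_self] at this
      rw [← this]
      exact Finset.sum_congr rfl fun t _ => by ring
    have hhigh : ∑ t ∈ Finset.range M, a (t + 2) = 0 :=
      Finset.sum_eq_zero fun t ht => by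
        have hlt : M + 1 - (t + 2) < M := by simp at ht; omega
        simp only [ha, show K + (t + 2) = K + t + 1 + 1 by ring, ih _ hlt, mul_zero]
    rw [Finset.sum_range_succ', Finset.sum_range_succ', hhigh] at hdiff
    have hK : (K : ℂ) + 1 ≠ 0 := Nat.cast_add_one_ne_zero K
    simpa [ha, he, sub_ne_zero.mpr hc, hK] using hdiff

lemma pow_mul_coeff_single_eq_of_compLin_eq_self {e c : ℂ} {u : MvPowerSeries (Fin 2) ℂ}
    (h : compLin e c u = u)
    (hy : ∀ M K, coeff (Finsupp.single 0 M + Finsupp.single 1 (K + 1)) u = 0) (M : ℕ) :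
    e ^ M * coeff (Finsupp.single 0 M) u = coeff (Finsupp.single 0 M) u := by
  have := congrArg (coeff (Finsupp.single 0 M + Finsupp.single 1 0)) h
  rw [coeff_compLin, Finset.sum_range_succ', Finset.sum_eq_zero fun t _ => by
    rw [zero_add, hy, mul_zero]] at this
  simpa using this

lemma coeff_eq_zero_of_compLin_neg_one_eq_self {c c' : ℂ} (hc : c ≠ c')
    {u : MvPowerSeries (Fin 2) ℂ} (h : compLin (-1) c u = u) (h' : compLin (-1) c' u = u)
    (m : Fin 2 →₀ ℕ) (hm : ¬(m 1 = 0 ∧ Even (m 0))) : coeff m u = 0 := by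
  have hy := coeff_single_add_single_succ_eq_zero_of_compLin_eq_self (by norm_num) hc h h'
  rw [Finsupp.eq_single_zero_add_single_one m]
  cases hK : m 1 with
  | succ K => exact hy (m 0) K
  | zero =>
    have hodd : Odd (m 0) := Nat.not_even_iff_odd.mp fun he => hm ⟨hK, he⟩
    have := pow_mul_coeff_single_eq_of_compLin_eq_self h hy (m 0)
    rw [hodd.neg_one_pow] at this
    rw [Finsupp.single_zero, add_zero]
    linear_combination -this / 2

/-- If a formal power series `u(x,y) ∈ ℂ[[x,y]]` is invariant under both
`τ₁*(x,y) = (-x, -2x+y)` and `τ₂*(x,y) = (-x, 2x+y)` (i.e. `u∘τ₁* = u` and `u∘τ₂* = u`),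
then `u` depends only on `x` and contains only even powers of `x`; in particular, if
additionally `u(x,0) = -u(-x,0)` (coefficientwise: `u_{i,0} = -(-1)^i u_{i,0}`),
then `u = 0`. -/
theorem stmt_7 (u : MvPowerSeries (Fin 2) ℂ)
    (h1 : compLin (-1) (-2) u = u) (h2 : compLin (-1) 2 u = u) :
    (∀ m : Fin 2 →₀ ℕ, MvPowerSeries.coeff m u ≠ 0 → m 1 = 0 ∧ Even (m 0)) ∧
    ((∀ i : ℕ, MvPowerSeries.coeff (Finsupp.single 0 i) u =
        -((-1 : ℂ) ^ i * MvPowerSeries.coeff (Finsupp.single 0 i) u)) → u = 0) := by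
  have hvanish := coeff_eq_zero_of_compLin_neg_one_eq_self (by norm_num) h1 h2
  refine ⟨fun m => Not.imp_symm (hvanish m), fun hodd => ?_⟩
  ext m
  by_cases hm : m 1 = 0 ∧ Even (m 0)
  · have := hodd (m 0)
    rw [hm.2.neg_one_pow, one_mul] at this
    rw [map_zero, Finsupp.eq_single_zero_add_single_one m, hm.1, Finsupp.single_zero, add_zero]
    linear_combination this / 2
  · exact hvanish m hm
end

section
/- Abstract solvability of the linearized equation: Let X = ⊕_{k≥1} X_k, Y = ⊕_{k≥1} Y_k, Z = ⊕_{k≥1} Z_k be graded real vector spaces (each summand finite-dimensional), and F : X × Y → Z with F(0,0)=0. Suppose DF(x,y) = D₁F(x) + D₂F(y) is linear and homogeneous (maps X_k × Y_k to Z_k), the quadratic remainder QF = F - DF satisfies π_k QF(x,y) = π_k QF([x]_{k-1}, [y]_{k-1}) for all k, there is a solution operator P : X → Y with F(x, P(x)) = 0 and P(0)=0, and D₂F : Y → Z is injective. Then L(x) := Σ_k π_k P(x_k) solves DF(x, L(x)) = 0 for all x ∈ X, and the remainder P̃ = P - L satisfies π_k P̃(x) = π_k P̃([x]_{k-1}) for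 all k. -/
/-!
Write `F = DF + Q`. In degree `k` the equation `F(x, P x) = 0` reads
`D₁ x_k + D₂ (P x)_k + Q([x]_{<k}, [P x]_{<k})_k = 0`, so by injectivity of `D₂` and induction
on `k`, `(P x)_k` depends only on `x_j` for `j ≤ k`. For `x` concentrated in degree `k` both
truncations vanish (using `P 0 = 0`), leaving `D₁ x_k + D₂ L(x)_k = 0`: this is `DF(x, L x) = 0`
degree by degree. Subtracting, `D₂ (P x - L x)_k = -Q([x]_{<k}, [P x]_{<k})_k`, and the right
side does not change when `x` is replaced by `[x]_{<k}`.
-/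

namespace DFinsupp

theorem filter_congr {ι : Type*} {β : ι → Type*} [∀ i, Zero (β i)] {p : ι → Prop}
    [DecidablePred p] {x y : Π₀ i, β i} (h : ∀ i, p i → x i = y i) :
    x.filter p = y.filter p := by
  ext i
  simp only [filter_apply]
  split_ifs with hi
  exacts [h i hi, rfl]

theorem filter_le_sub_one_eq_filter_lt {β : ℕ → Type*} [∀ i, Zero (β i)] (x : Π₀ i, β i)
    {k : ℕ} (hk : k ≠ 0) : x.filter (· ≤ k - 1) = x.filter (· < k) := by
  ext i
  simp only [filter_apply, Nat.le_sub_one_iff_lt (Nat.pos_of_ne_zero hk)]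

end DFinsupp

open DFinsupp Function

section GradedSolution

variable {ι R : Type*} [Semiring R]
  {X Y Z : ι → Type*} [∀ k, AddCommMonoid (X k)] [∀ k, Module R (X k)]
  [∀ k, AddCommGroup (Y k)] [∀ k, Module R (Y k)]
  [∀ k, AddCommGroup (Z k)] [∀ k, Module R (Z k)]

def linearPart [DecidableEq ι] (P : (Π₀ k, X k) → Π₀ k, Y k) (hP0 : P 0 = 0)
    (x : Π₀ k, X k) : Π₀ k, Y k :=
  mapRange (fun k v => P (single k v) k)
    (fun k => by simp only [single_zero, hP0, DFinsupp.zero_apply]) x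

theorem linearPart_apply [DecidableEq ι] {P : (Π₀ k, X k) → Π₀ k, Y k} (hP0 : P 0 = 0)
    (x : Π₀ k, X k) (k : ι) : linearPart P hP0 x k = P (single k (x k)) k :=
  mapRange_apply _ _ x k

variable [Preorder ι] [DecidableLT ι]

/-- `P x` solves `D₁ x + D₂ y + Q(x, y) = 0` degree by degree, where in degree `k` the
remainder `Q` is evaluated on the truncations to degrees `< k`. -/
def IsGradedSolution (D1 : ∀ k, X k →ₗ[R] Z k) (D2 : ∀ k, Y k →ₗ[R] Z k)
    (Q : (Π₀ k, X k) → (Π₀ k, Y k) → Π₀ k, Z k) (P : (Π₀ k, X k) → Π₀ k, Y k) : Prop :=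
  ∀ x k, D1 k (x k) + D2 k (P x k) + Q (x.filter (· < k)) ((P x).filter (· < k)) k = 0

namespace IsGradedSolution

variable [WellFoundedLT ι] {D1 : ∀ k, X k →ₗ[R] Z k} {D2 : ∀ k, Y k →ₗ[R] Z k}
  {Q : (Π₀ k, X k) → (Π₀ k, Y k) → Π₀ k, Z k} {P : (Π₀ k, X k) → Π₀ k, Y k}

theorem apply_eq_of_forall_le (h : IsGradedSolution D1 D2 Q P)
    (hD2 : ∀ k, Injective (D2 k)) {k : ι} {x x' : Π₀ k, X k} (hxx' : ∀ j ≤ k, x j = x' j) :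
    P x k = P x' k := by
  induction k using WellFoundedLT.induction generalizing x x' with
  | ind k ih =>
    have hx : x.filter (· < k) = x'.filter (· < k) := filter_congr fun j hj => hxx' j hj.le
    have hPx : (P x).filter (· < k) = (P x').filter (· < k) :=
      filter_congr fun j hj => ih j hj fun i hi => hxx' i (hi.trans hj.le)
    have e := h x' k
    rw [← hxx' k le_rfl, ← hx, ← hPx, ← h x k] at e
    exact hD2 k (add_left_cancel (add_right_cancel e)).symm

theorem filter_lt_map_filter_lt (h : IsGradedSolution D1 D2 Q P)
    (hD2 : ∀ k, Injective (D2 k)) (x : Π₀ k, X k) (k : ι) :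
    (P (x.filter (· < k))).filter (· < k) = (P x).filter (· < k) :=
  filter_congr fun _ hj =>
    h.apply_eq_of_forall_le hD2 fun _ hi => filter_apply_pos _ (hi.trans_lt hj)

variable [DecidableEq ι]

theorem map_single (h : IsGradedSolution D1 D2 Q P) (hD2 : ∀ k, Injective (D2 k))
    (hP0 : P 0 = 0) (hQ0 : Q 0 0 = 0) (k : ι) (v : X k) :
    D1 k v + D2 k (P (single k v) k) = 0 := by
  have hv : (single k v).filter (· < k) = 0 := filter_single_neg k v (lt_irrefl k)
  have hPv : (P (single k v)).filter (· < k) = 0 := by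
    rw [← h.filter_lt_map_filter_lt hD2, hv, hP0, filter_zero]
  simpa only [hv, hPv, hQ0, single_eq_same, DFinsupp.zero_apply, add_zero] using h (single k v) k

theorem map_linearPart_apply (h : IsGradedSolution D1 D2 Q P) (hD2 : ∀ k, Injective (D2 k))
    (hP0 : P 0 = 0) (hQ0 : Q 0 0 = 0) (x : Π₀ k, X k) (k : ι) :
    D2 k (linearPart P hP0 x k) = -D1 k (x k) := by
  rw [linearPart_apply, eq_neg_iff_add_eq_zero, add_comm, h.map_single hD2 hP0 hQ0]

theorem map_sub_linearPart_apply (h : IsGradedSolution D1 D2 Q P)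
    (hD2 : ∀ k, Injective (D2 k)) (hP0 : P 0 = 0) (hQ0 : Q 0 0 = 0) (x : Π₀ k, X k) (k : ι) :
    D2 k ((P x - linearPart P hP0 x) k) = -Q (x.filter (· < k)) ((P x).filter (· < k)) k := by
  rw [DFinsupp.sub_apply, map_sub, h.map_linearPart_apply hD2 hP0 hQ0, sub_neg_eq_add,
    eq_neg_iff_add_eq_zero, add_comm (D2 k _), h x k]

theorem sub_linearPart_apply_eq (h : IsGradedSolution D1 D2 Q P)
    (hD2 : ∀ k, Injective (D2 k)) (hP0 : P 0 = 0) (hQ0 : Q 0 0 = 0) (x : Π₀ k, X k) (k : ι) :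
    (P x - linearPart P hP0 x) k =
      (P (x.filter (· < k)) - linearPart P hP0 (x.filter (· < k))) k := by
  apply hD2 k
  rw [h.map_sub_linearPart_apply hD2 hP0 hQ0, h.map_sub_linearPart_apply hD2 hP0 hQ0,
    h.filter_lt_map_filter_lt hD2, filter_congr fun _ hj => filter_apply_pos _ hj]

end IsGradedSolution

end GradedSolution

theorem stmt_18_general
    (Xk Yk Zk : ℕ → Type)
    [∀ k, AddCommGroup (Xk k)] [∀ k, Module ℝ (Xk k)]
    [∀ k, AddCommGroup (Yk k)] [∀ k, Module ℝ (Yk k)]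
    [∀ k, AddCommGroup (Zk k)] [∀ k, Module ℝ (Zk k)]
    [Subsingleton (Zk 0)]
    (F : (Π₀ k, Xk k) → (Π₀ k, Yk k) → (Π₀ k, Zk k))
    (D1 : ∀ k, Xk k →ₗ[ℝ] Zk k) (D2 : ∀ k, Yk k →ₗ[ℝ] Zk k)
    (DF : (Π₀ k, Xk k) → (Π₀ k, Yk k) → (Π₀ k, Zk k))
    (hDF : ∀ x y, DF x y =
      DFinsupp.mapRange (fun k => D1 k) (fun k => (D1 k).map_zero) x +
      DFinsupp.mapRange (fun k => D2 k) (fun k => (D2 k).map_zero) y)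
    (hF0 : F 0 0 = 0)
    (hQ : ∀ (x : Π₀ k, Xk k) (y : Π₀ k, Yk k) (k : ℕ),
      (F x y - DF x y) k =
      (F (x.filter (· ≤ k - 1)) (y.filter (· ≤ k - 1)) -
        DF (x.filter (· ≤ k - 1)) (y.filter (· ≤ k - 1))) k)
    (P : (Π₀ k, Xk k) → (Π₀ k, Yk k))
    (hP : ∀ x, F x (P x) = 0) (hP0 : P 0 = 0)
    (hD2 : ∀ k, Function.Injective (D2 k)) :
    ∃ L : (Π₀ k, Xk k) → (Π₀ k, Yk k),
      (∀ (x : Π₀ k, Xk k) (k : ℕ), L x k = P (DFinsupp.single k (x k)) k) ∧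
      (∀ x : Π₀ k, Xk k, DF x (L x) = 0) ∧
      (∀ (x : Π₀ k, Xk k) (k : ℕ),
        (P x - L x) k = (P (x.filter (· ≤ k - 1)) - L (x.filter (· ≤ k - 1))) k) := by
  have hDF_apply x y k : DF x y k = D1 k (x k) + D2 k (y k) := by
    simp only [hDF, DFinsupp.add_apply, mapRange_apply]
  have : Subsingleton (Yk 0) := (hD2 0).subsingleton
  -- `· ≤ k - 1` and `· < k` differ only in degree `0`, where `Zk 0` and `Yk 0` are trivial.
  have hsol : IsGradedSolution D1 D2 (fun x y => F x y - DF x y) P := by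
    intro x k
    rcases eq_or_ne k 0 with rfl | hk
    · exact Subsingleton.elim _ _
    have hQk := hQ x (P x) k
    rw [filter_le_sub_one_eq_filter_lt _ hk, filter_le_sub_one_eq_filter_lt _ hk, hP,
      zero_sub] at hQk
    dsimp only
    rw [← hQk, DFinsupp.neg_apply, hDF_apply, add_neg_cancel]
  have hQ0 : F 0 0 - DF 0 0 = 0 := by
    ext k
    simp [hF0, hDF_apply]
  refine ⟨linearPart P hP0, linearPart_apply hP0, fun x => ?_, fun x k => ?_⟩
  · ext k
    rw [hDF_apply, hsol.map_linearPart_apply hD2 hP0 hQ0, add_neg_cancel, DFinsupp.zero_apply]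
  · rcases eq_or_ne k 0 with rfl | hk
    · exact Subsingleton.elim _ _
    rw [filter_le_sub_one_eq_filter_lt _ hk]
    exact hsol.sub_linearPart_apply_eq hD2 hP0 hQ0 x k

/-- abstract solvability of the linearized equation.  Let
`X = ⊕_{k≥1} X_k`, `Y = ⊕_{k≥1} Y_k`, `Z = ⊕_{k≥1} Z_k` be graded real vector spaces
with finite-dimensional graded pieces (modelled as `Π₀ k, X_k` over `ℕ`, with trivial
pieces in degree `0`), and let `F : X × Y → Z` with `F(0,0) = 0`.  Suppose the
derivative `DF(x,y) = D₁F(x) + D₂F(y)` is linear and homogeneous — i.e. given by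
degreewise linear maps `D₁ : X_k →ₗ Z_k`, `D₂ : Y_k →ₗ Z_k` — that the remainder
`QF = F - DF` satisfies `π_k QF(x,y) = π_k QF([x]_{k-1}, [y]_{k-1})` for all `k`
(where `[x]_j` is the truncation to degrees `≤ j` and `π_k` the `k`-th projection),
that there is a solution operator `P : X → Y` with `F(x, P(x)) = 0` and `P(0) = 0`,
and that `D₂F` is injective.  Then `L(x) := Σ_k π_k P(x_k)` satisfies
`DF(x, L(x)) = 0` for every `x ∈ X`, and the remainder `P̃ = P - L` satisfies
`π_k P̃(x) = π_k P̃([x]_{k-1})` for all `k`. -/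
theorem stmt_18
    (Xk Yk Zk : ℕ → Type)
    [∀ k, AddCommGroup (Xk k)] [∀ k, Module ℝ (Xk k)] [∀ k, FiniteDimensional ℝ (Xk k)]
    [∀ k, AddCommGroup (Yk k)] [∀ k, Module ℝ (Yk k)] [∀ k, FiniteDimensional ℝ (Yk k)]
    [∀ k, AddCommGroup (Zk k)] [∀ k, Module ℝ (Zk k)] [∀ k, FiniteDimensional ℝ (Zk k)]
    [Subsingleton (Xk 0)] [Subsingleton (Yk 0)] [Subsingleton (Zk 0)]
    (F : (Π₀ k, Xk k) → (Π₀ k, Yk k) → (Π₀ k, Zk k))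
    (D1 : ∀ k, Xk k →ₗ[ℝ] Zk k) (D2 : ∀ k, Yk k →ₗ[ℝ] Zk k)
    (DF : (Π₀ k, Xk k) → (Π₀ k, Yk k) → (Π₀ k, Zk k))
    (hDF : ∀ x y, DF x y =
      DFinsupp.mapRange (fun k => D1 k) (fun k => (D1 k).map_zero) x +
      DFinsupp.mapRange (fun k => D2 k) (fun k => (D2 k).map_zero) y)
    (hF0 : F 0 0 = 0)
    (hQ : ∀ (x : Π₀ k, Xk k) (y : Π₀ k, Yk k) (k : ℕ),
      (F x y - DF x y) k =
      (F (x.filter (· ≤ k - 1)) (y.filter (· ≤ k - 1)) -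
        DF (x.filter (· ≤ k - 1)) (y.filter (· ≤ k - 1))) k)
    (P : (Π₀ k, Xk k) → (Π₀ k, Yk k))
    (hP : ∀ x, F x (P x) = 0) (hP0 : P 0 = 0)
    (hD2 : ∀ k, Function.Injective (D2 k)) :
    ∃ L : (Π₀ k, Xk k) → (Π₀ k, Yk k),
      (∀ (x : Π₀ k, Xk k) (k : ℕ), L x k = P (DFinsupp.single k (x k)) k) ∧
      (∀ x : Π₀ k, Xk k, DF x (L x) = 0) ∧
      (∀ (x : Π₀ k, Xk k) (k : ℕ),
        (P x - L x) k = (P (x.filter (· ≤ k - 1)) - L (x.filter (· ≤ k - 1))) k) :=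
  stmt_18_general Xk Yk Zk F D1 D2 DF hDF hF0 hQ P hP hP0 hD2
end
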